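/- arXiv:2011.14987 — 3 statements merged into one kernel-verified Lean document; each statement's English description precedes it below -/
import Mathlib

section
/- For every u ∈ H^1(0,∞), one has ∑_{n=2}^∞ n^{-1} |u(ln n)|^2 ≤ C ∫_0^∞ (|u'(x)|^2 + |u(x)|^2) dx for some universal constant C. -/
open MeasureTheory Filter Set intervalIntegral
open scoped RealInnerProductSpace

/-!
On an interval `[a, b]` the fundamental theorem of calculus applied to `‖u‖²`, whose derivative
`2⟪u, u'⟫` is bounded by `‖u'‖² + ‖u‖²`, compares `‖u a‖²` with the minimum of `‖u‖²` on `[a, b]`,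
and that minimum is at most the mean value of `‖u‖²`. Hence
`(b - a) ‖u a‖² ≤ (1 + (b - a)) ∫ₐᵇ (‖u'‖² + ‖u‖²)`.
The points `log n` have gaps `log (n + 1) - log n ≍ 1 / n`, so summing these local estimates over
the intervals `[log n, log (n + 1)]`, which tile `[log 2, ∞)`, bounds `∑ n⁻¹ ‖u (log n)‖²`.
-/

section TraceEstimate

variable {E : Type*} [NormedAddCommGroup E] [InnerProductSpace ℝ E]

lemma abs_two_mul_inner_le_sq_norm_add_sq_norm (x y : E) :
    |2 * ⟪x, y⟫| ≤ ‖y‖ ^ 2 + ‖x‖ ^ 2 := by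
  rw [abs_mul, abs_two]
  nlinarith [abs_real_inner_le_norm x y, sq_nonneg (‖x‖ - ‖y‖)]

variable {u u' : ℝ → E} {a b : ℝ}

lemma sq_norm_le_sq_norm_add_integral (hab : a ≤ b) (hu : ∀ y ∈ Icc a b, HasDerivAt u (u' y) y)
    (hu' : ContinuousOn u' (Icc a b)) :
    ‖u a‖ ^ 2 ≤ ‖u b‖ ^ 2 + ∫ y in a..b, (‖u' y‖ ^ 2 + ‖u y‖ ^ 2) := by
  have hu_cont : ContinuousOn u (Icc a b) := fun y hy => (hu y hy).continuousAt.continuousWithinAt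
  have hderiv : ∀ y ∈ uIcc a b, HasDerivAt (‖u ·‖ ^ 2) (2 * ⟪u y, u' y⟫) y := fun y hy =>
    (hu y (uIcc_of_le hab ▸ hy)).norm_sq
  have hint : IntervalIntegrable (fun y => 2 * ⟪u y, u' y⟫) volume a b :=
    (continuousOn_const.mul (hu_cont.inner hu')).intervalIntegrable_of_Icc hab
  have hbound : |∫ y in a..b, 2 * ⟪u y, u' y⟫| ≤ ∫ y in a..b, (‖u' y‖ ^ 2 + ‖u y‖ ^ 2) :=
    (abs_integral_le_integral_abs hab).trans <|
      integral_mono_on hab hint.abs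
        ((hu'.norm.pow 2).add (hu_cont.norm.pow 2) |>.intervalIntegrable_of_Icc hab)
        fun y _ => abs_two_mul_inner_le_sq_norm_add_sq_norm _ _
  have hftc := integral_eq_sub_of_hasDerivAt hderiv hint
  linarith [neg_abs_le (∫ y in a..b, 2 * ⟪u y, u' y⟫)]

theorem sub_mul_sq_norm_le_integral (hab : a ≤ b) (hu : ∀ y ∈ Icc a b, HasDerivAt u (u' y) y)
    (hu' : ContinuousOn u' (Icc a b)) :
    (b - a) * ‖u a‖ ^ 2 ≤ (1 + (b - a)) * ∫ y in a..b, (‖u' y‖ ^ 2 + ‖u y‖ ^ 2) := by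
  have hu_cont : ContinuousOn u (Icc a b) := fun y hy => (hu y hy).continuousAt.continuousWithinAt
  obtain ⟨x, hx, hmin⟩ := isCompact_Icc.exists_isMinOn (nonempty_Icc.2 hab) (hu_cont.norm.pow 2)
  set K := ∫ y in a..b, (‖u' y‖ ^ 2 + ‖u y‖ ^ 2)
  have hsub : Icc a x ⊆ Icc a b := Icc_subset_Icc_right hx.2
  have hK_int : IntervalIntegrable (fun y => ‖u' y‖ ^ 2 + ‖u y‖ ^ 2) volume a b :=
    (hu'.norm.pow 2).add (hu_cont.norm.pow 2) |>.intervalIntegrable_of_Icc hab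
  have hK_nonneg : 0 ≤ K := integral_nonneg hab fun y _ => by positivity
  have h_left : ‖u a‖ ^ 2 ≤ ‖u x‖ ^ 2 + K := by
    refine (sq_norm_le_sq_norm_add_integral hx.1 (fun y hy => hu y (hsub hy))
      (hu'.mono hsub)).trans ?_
    gcongr
    exact integral_mono_interval le_rfl hx.1 hx.2 (Eventually.of_forall fun y => by positivity)
      hK_int
  have h_min : (b - a) * ‖u x‖ ^ 2 ≤ ∫ y in a..b, ‖u y‖ ^ 2 := by
    calc (b - a) * ‖u x‖ ^ 2 = ∫ _ in a..b, ‖u x‖ ^ 2 := by simp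
      _ ≤ ∫ y in a..b, ‖u y‖ ^ 2 :=
        integral_mono_on hab intervalIntegrable_const
          ((hu_cont.norm.pow 2).intervalIntegrable_of_Icc hab) fun y hy => hmin hy
  have h_mean : ∫ y in a..b, ‖u y‖ ^ 2 ≤ K :=
    integral_mono_on hab ((hu_cont.norm.pow 2).intervalIntegrable_of_Icc hab) hK_int
      fun y _ => le_add_of_nonneg_left (by positivity)
  linarith [mul_le_mul_of_nonneg_left h_left (sub_nonneg.2 hab)]

theorem tsum_mul_sq_norm_le_integral {s w : ℕ → ℝ} {c δ : ℝ} (hs : Monotone s) (hs₀ : 0 ≤ s 0)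
    (hc : 0 ≤ c) (hw : ∀ n, 0 ≤ w n) (hws : ∀ n, w n ≤ c * (s (n + 1) - s n))
    (hδ : ∀ n, s (n + 1) - s n ≤ δ) (hu : ∀ y ∈ Ici 0, HasDerivAt u (u' y) y)
    (hu' : ContinuousOn u' (Ici 0))
    (hint : IntegrableOn (fun y => ‖u' y‖ ^ 2 + ‖u y‖ ^ 2) (Ioi 0)) :
    ∑' n, w n * ‖u (s n)‖ ^ 2 ≤ c * (1 + δ) * ∫ y in Ioi 0, (‖u' y‖ ^ 2 + ‖u y‖ ^ 2) := by
  set F := fun y => ‖u' y‖ ^ 2 + ‖u y‖ ^ 2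
  have hF_nonneg : ∀ y, 0 ≤ F y := fun y => by positivity
  have hsub (n : ℕ) : Icc (s n) (s (n + 1)) ⊆ Ici 0 := fun y hy =>
    hs₀.trans ((hs (Nat.zero_le n)).trans hy.1)
  have hF_int (n : ℕ) : IntervalIntegrable F volume (s n) (s (n + 1)) :=
    (intervalIntegrable_iff_integrableOn_Ioc_of_le (hs n.le_succ)).2 <|
      hint.mono_set fun y hy => (hs₀.trans (hs (Nat.zero_le n))).trans_lt hy.1
  have hterm : ∀ n, w n * ‖u (s n)‖ ^ 2 ≤ c * (1 + δ) * ∫ y in s n..s (n + 1), F y := by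
    intro n
    have hgap := hs n.le_succ
    have hlocal := sub_mul_sq_norm_le_integral hgap (fun y hy => hu y (hsub n hy))
      (hu'.mono (hsub n))
    have hK : 0 ≤ ∫ y in s n..s (n + 1), F y := integral_nonneg hgap fun y _ => hF_nonneg y
    calc w n * ‖u (s n)‖ ^ 2 ≤ c * ((s (n + 1) - s n) * ‖u (s n)‖ ^ 2) := by
          rw [← mul_assoc]; gcongr; exact hws n
      _ ≤ c * ((1 + (s (n + 1) - s n)) * ∫ y in s n..s (n + 1), F y) := by gcongr
      _ ≤ c * ((1 + δ) * ∫ y in s n..s (n + 1), F y) := by gcongr; exact hδ n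
      _ = c * (1 + δ) * ∫ y in s n..s (n + 1), F y := by ring
  refine Real.tsum_le_of_sum_range_le (fun n => mul_nonneg (hw n) (by positivity)) fun N => ?_
  calc ∑ n ∈ Finset.range N, w n * ‖u (s n)‖ ^ 2
      ≤ ∑ n ∈ Finset.range N, c * (1 + δ) * ∫ y in s n..s (n + 1), F y :=
        Finset.sum_le_sum fun n _ => hterm n
    _ = c * (1 + δ) * ∫ y in s 0..s N, F y := by
        rw [← Finset.mul_sum, sum_integral_adjacent_intervals fun k _ => hF_int k]
    _ ≤ c * (1 + δ) * ∫ y in Ioi 0, F y := by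
        have hδ₀ : 0 ≤ δ := (sub_nonneg.2 (hs (Nat.le_succ 0))).trans (hδ 0)
        gcongr ?_ * ?_
        rw [integral_of_le (hs (Nat.zero_le N))]
        exact setIntegral_mono_set hint (Eventually.of_forall hF_nonneg)
          (Eventually.of_forall fun y hy => lt_of_le_of_lt hs₀ hy.1)

end TraceEstimate

namespace Real

lemma inv_add_one_le_log_add_one_sub_log {x : ℝ} (hx : 0 < x) :
    (x + 1)⁻¹ ≤ log (x + 1) - log x := by
  rw [← log_div (by positivity) hx.ne']
  have := one_sub_inv_le_log_of_pos (show 0 < (x + 1) / x by positivity)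
  rw [inv_div] at this
  convert this using 1
  field_simp
  ring

lemma log_add_one_sub_log_le_inv {x : ℝ} (hx : 0 < x) : log (x + 1) - log x ≤ x⁻¹ := by
  rw [← log_div (by positivity) hx.ne']
  convert log_le_sub_one_of_pos (show 0 < (x + 1) / x by positivity) using 1
  field_simp
  ring

end Real

/-- Example 3.2 (inequality (3.9)): for `u ∈ H¹(0,∞)`,
`∑_{n≥2} n⁻¹ |u(ln n)|² ≤ C ∫₀^∞ (|u'|² + |u|²)` for a universal constant `C`. -/
theorem sum_log_trace_inequality :
    ∃ C : ℝ, ∀ u u' : ℝ → ℂ,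
      (∀ y ∈ Set.Ici (0:ℝ), HasDerivAt u (u' y) y) →
      ContinuousOn u' (Set.Ici 0) →
      IntegrableOn (fun y => ‖u y‖ ^ 2) (Set.Ioi (0:ℝ)) →
      IntegrableOn (fun y => ‖u' y‖ ^ 2) (Set.Ioi (0:ℝ)) →
      ∑' n : ℕ, ((n : ℝ) + 2)⁻¹ * ‖u (Real.log ((n : ℝ) + 2))‖ ^ 2 ≤
        C * ∫ y in Set.Ioi (0:ℝ), (‖u' y‖ ^ 2 + ‖u y‖ ^ 2) := by
  refine ⟨3 / 2 * (1 + 2⁻¹), fun u u' hu hu' hu_sq hu'_sq => ?_⟩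
  have hx (n : ℕ) : (2 : ℝ) ≤ n + 2 := by linarith [n.cast_nonneg (α := ℝ)]
  have hsucc (n : ℕ) : ((n + 1 : ℕ) : ℝ) + 2 = (n + 2) + 1 := by push_cast; ring
  have hgap_ge (n : ℕ) :
      (n + 2 : ℝ)⁻¹ ≤ 3 / 2 * (Real.log ((n + 1 : ℕ) + 2) - Real.log (n + 2)) := by
    rw [hsucc]
    calc (n + 2 : ℝ)⁻¹ ≤ 3 / 2 * ((n : ℝ) + 2 + 1)⁻¹ := by
          rw [inv_le_iff_one_le_mul₀ (by linarith [hx n])]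
          field_simp
          linarith [hx n]
      _ ≤ _ := by gcongr; exact Real.inv_add_one_le_log_add_one_sub_log (by linarith [hx n])
  have hgap_le (n : ℕ) : Real.log ((n + 1 : ℕ) + 2) - Real.log (n + 2) ≤ 2⁻¹ := by
    rw [hsucc]
    exact (Real.log_add_one_sub_log_le_inv (by linarith [hx n])).trans (inv_anti₀ two_pos (hx n))
  have hw (n : ℕ) : 0 ≤ (n + 2 : ℝ)⁻¹ := inv_nonneg.2 (by linarith [hx n])
  exact tsum_mul_sq_norm_le_integral (s := fun n : ℕ => Real.log (n + 2))
    (monotone_nat_of_le_succ fun n => by linarith [hgap_ge n, hw n])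
    (Real.log_nonneg (by linarith [hx 0])) (by norm_num) hw hgap_ge hgap_le hu hu'
    (hu'_sq.add hu_sq)
end

section
/- Let s ∈ (0,1], r ≥ 0 with 2r ≥ 1 - s, set x_n = n^s and suppose |v_n| ≤ C(1+n)^{-r}. Then sup_{R > 0} ∑_{n : x_n ∈ (R, R+1)} v_n^2 < ∞, i.e., the squared weights v_n^2 have uniformly bounded sums over all unit windows of the values n^s. -/
/-!
By concavity of `t ↦ t ^ s`, `v n ^ 2 ≤ C² (n + 1) ^ (s - 1) ≤ C² / s * ((n + 1) ^ s - n ^ s)`,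
so the sum over a window is dominated by a sum of increments of `n ↦ n ^ s` over indices whose
values lie in `(R, R + 1)`. Since `n ^ s` is increasing, this telescopes to at most the window
length plus one increment, and `(n + 1) ^ s ≤ n ^ s + 1` by subadditivity.
-/

open Finset

theorem Real.mul_rpow_sub_one_mul_sub_le_rpow_sub_rpow {s x y : ℝ} (hs : 0 ≤ s) (hs1 : s ≤ 1)
    (hx : 0 < x) (hy : 0 ≤ y) :
    s * x ^ (s - 1) * (x - y) ≤ x ^ s - y ^ s := by
  have hyx : 0 ≤ 1 + (y / x - 1) := by simpa using div_nonneg hy hx.le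
  have bernoulli := rpow_one_add_le_one_add_mul_self (by linarith) hs hs1 (s := y / x - 1)
  calc s * x ^ (s - 1) * (x - y) = x ^ s - x ^ s * (1 + s * (y / x - 1)) := by
        rw [Real.rpow_sub_one hx.ne']; field_simp; ring
    _ ≤ x ^ s - x ^ s * (1 + (y / x - 1)) ^ s := by gcongr
    _ = x ^ s - y ^ s := by
        rw [add_sub_cancel, ← Real.mul_rpow hx.le (by positivity), mul_div_cancel₀ _ hx.ne']

theorem Monotone.sum_succ_sub_le_of_mem_Icc {g : ℕ → ℝ} (hg : Monotone g) {d a b : ℝ}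
    (hd : ∀ n, g (n + 1) ≤ g n + d) (hab : a ≤ b) {T : Finset ℕ}
    (hT : ∀ n ∈ T, g n ∈ Set.Icc a b) :
    ∑ n ∈ T, (g (n + 1) - g n) ≤ b - a + d := by
  have hinc : ∀ n, 0 ≤ g (n + 1) - g n := fun n => sub_nonneg.2 (hg n.le_succ)
  rcases T.eq_empty_or_nonempty with rfl | hne
  · simpa using add_nonneg (sub_nonneg.2 hab) (by linarith [hd 0, hinc 0])
  set m := T.min' hne
  set M := T.max' hne
  have hm := hT m (T.min'_mem hne)
  have hM := hT M (T.max'_mem hne)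
  calc ∑ n ∈ T, (g (n + 1) - g n) ≤ ∑ n ∈ Icc m M, (g (n + 1) - g n) :=
        sum_le_sum_of_subset_of_nonneg (fun n hn => mem_Icc.2 ⟨T.min'_le n hn, T.le_max' n hn⟩)
          fun n _ _ => hinc n
    _ = g (M + 1) - g m := sum_Icc_sub (T.min'_le M (T.max'_mem hne)) g
    _ ≤ b - a + d := by linarith [hd M, hm.1, hM.2]

theorem sq_le_div_mul_rpow_sub_rpow_of_abs_le {s r C w x : ℝ} (hs : 0 < s) (hs1 : s ≤ 1)
    (hrs : 1 - s ≤ 2 * r) (hx : 0 ≤ x) (hw : |w| ≤ C * (1 + x) ^ (-r)) :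
    w ^ 2 ≤ C ^ 2 / s * ((x + 1) ^ s - x ^ s) := by
  have tangent := Real.mul_rpow_sub_one_mul_sub_le_rpow_sub_rpow hs.le hs1
    (by positivity : 0 < x + 1) hx
  rw [add_sub_cancel_left, mul_one, ← le_div_iff₀' hs] at tangent
  calc w ^ 2 = |w| ^ 2 := (sq_abs w).symm
    _ ≤ (C * (1 + x) ^ (-r)) ^ 2 := by gcongr
    _ = C ^ 2 * (1 + x) ^ (-(2 * r)) := by
        rw [mul_pow, ← Real.rpow_mul_natCast (by positivity)]; ring_nf
    _ ≤ C ^ 2 * (x + 1) ^ (s - 1) := by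
        rw [add_comm 1 x]
        gcongr
        · linarith
        · linarith
    _ ≤ C ^ 2 / s * ((x + 1) ^ s - x ^ s) := by
        rw [div_mul_eq_mul_div, mul_div_assoc]; gcongr

theorem window_condition_of_power_weights_general
    (s r : ℝ) (hs : 0 < s) (hs1 : s ≤ 1) (hrs : 2 * r ≥ 1 - s)
    (v : ℕ → ℝ) (C : ℝ) (hv : ∀ n : ℕ, |v n| ≤ C * (1 + (n : ℝ)) ^ (-r)) :
    ∃ K : ℝ, ∀ R : ℝ, 0 < R →
      ∑' n : {n : ℕ // (n : ℝ) ^ s ∈ Set.Ioo R (R + 1)}, (v n) ^ 2 ≤ K := by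
  let g : ℕ → ℝ := fun n => (n : ℝ) ^ s
  have hg : Monotone g := fun m n hmn => by
    dsimp only [g]; gcongr
  have hg_step : ∀ n, g (n + 1) ≤ g n + 1 := fun n => by
    simpa [g] using Real.rpow_add_le_add_rpow n.cast_nonneg zero_le_one hs.le hs1
  refine ⟨C ^ 2 / s * 2, fun R _ => tsum_le_of_sum_le' (by positivity) fun t => ?_⟩
  let T := t.map (Function.Embedding.subtype _)
  have hT : ∀ n ∈ T, g n ∈ Set.Icc R (R + 1) := fun n hn => by
    obtain ⟨⟨n, hwindow⟩, -, rfl⟩ := mem_map.1 hn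
    exact Set.Ioo_subset_Icc_self hwindow
  calc ∑ n ∈ t, v n ^ 2 = ∑ n ∈ T, v n ^ 2 := by rw [sum_map]; rfl
    _ ≤ ∑ n ∈ T, C ^ 2 / s * (g (n + 1) - g n) := sum_le_sum fun n _ => by
        simpa [g] using sq_le_div_mul_rpow_sub_rpow_of_abs_le hs hs1 hrs n.cast_nonneg (hv n)
    _ = C ^ 2 / s * ∑ n ∈ T, (g (n + 1) - g n) := by rw [mul_sum]
    _ ≤ C ^ 2 / s * (R + 1 - R + 1) := by
        gcongr
        exact hg.sum_succ_sub_le_of_mem_Icc hg_step (by linarith) hT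
    _ = C ^ 2 / s * 2 := by ring

/-- Condition (1.7) implies the window condition (1.5): if `s ∈ (0,1]`, `r ≥ 0`,
`2r ≥ 1 - s`, `x_n = n^s` and `|v_n| ≤ C(1+n)^{-r}`, then
`sup_{R>0} ∑_{n : n^s ∈ (R,R+1)} v_n² < ∞`. -/
theorem window_condition_of_power_weights
    (s r : ℝ) (hs : 0 < s) (hs1 : s ≤ 1) (hr : 0 ≤ r) (hrs : 2 * r ≥ 1 - s)
    (v : ℕ → ℝ) (C : ℝ) (hv : ∀ n : ℕ, |v n| ≤ C * (1 + (n : ℝ)) ^ (-r)) :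
    ∃ K : ℝ, ∀ R : ℝ, 0 < R →
      ∑' n : {n : ℕ // (n : ℝ) ^ s ∈ Set.Ioo R (R + 1)}, (v n) ^ 2 ≤ K :=
  window_condition_of_power_weights_general s r hs hs1 hrs v C hv
end

section
/- Let (a_n)_{n≥0} be positive reals with a_{-1} = 0, and let (f_n^{(+)}) and (f_n^{(-)}) be two solutions of the three-term recurrence a_{n-1} u_{n-1} + b_n u_n + a_n u_{n+1} = z u_n with asymptotics f_n^{(±)} = v_n e^{±iΩ_n}(1 + ε_n^{(±)}), where v_n > 0, Ω_n ∈ ℝ. Suppose Ω_{n+1} - Ω_n → ϖ with ϖ ∉ πℤ and ε_n^{(±)} → 0 as n → ∞, and suppose the Wronskian W = a_n(f_n^{(+)} f_{n+1}^{(-)} - f_{n+1}^{(+)} f_n^{(-)}) (which is independent of n) is nonzero. Then lim_{n→∞} a_n v_n v_{n+1} exists and equals |W|/(2|sin ϖ|) ≠ 0. -/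
/-!
The Wronskian `W = a_n (f_n⁺ f_{n+1}⁻ - f_{n+1}⁺ f_n⁻)` does not depend on `n`. Inserting the
asymptotic forms factors it as `W = a_n v_n v_{n+1} E_n` with
`E_n = e^{-iΔ_n}(1 + ε_n⁺)(1 + ε_{n+1}⁻) - e^{iΔ_n}(1 + ε_{n+1}⁺)(1 + ε_n⁻)` and
`Δ_n = Ω_{n+1} - Ω_n`. Since `E_n → e^{-iϖ} - e^{iϖ} = -2i sin ϖ ≠ 0`, taking norms gives
`a_n v_n v_{n+1} = |W| / |E_n| → |W| / (2 |sin ϖ|)`.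
-/

open Filter Topology Complex

section Wronskian

variable {R : Type*} [CommRing R]

def jacobiWronskian (a f g : ℕ → R) (n : ℕ) : R :=
  a n * (f n * g (n + 1) - f (n + 1) * g n)

theorem jacobiWronskian_succ {a b f g : ℕ → R} {z : R}
    (hf : ∀ n, a n * f n + b (n + 1) * f (n + 1) + a (n + 1) * f (n + 2) = z * f (n + 1))
    (hg : ∀ n, a n * g n + b (n + 1) * g (n + 1) + a (n + 1) * g (n + 2) = z * g (n + 1))
    (n : ℕ) : jacobiWronskian a f g (n + 1) = jacobiWronskian a f g n := by
  unfold jacobiWronskian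
  linear_combination f (n + 1) * hg n - g (n + 1) * hf n

theorem jacobiWronskian_eq {a b f g : ℕ → R} {z : R}
    (hf : ∀ n, a n * f n + b (n + 1) * f (n + 1) + a (n + 1) * f (n + 2) = z * f (n + 1))
    (hg : ∀ n, a n * g n + b (n + 1) * g (n + 1) + a (n + 1) * g (n + 2) = z * g (n + 1))
    (m n : ℕ) : jacobiWronskian a f g m = jacobiWronskian a f g n := by
  have h : ∀ k, jacobiWronskian a f g k = jacobiWronskian a f g 0 := fun k => by
    induction k with
    | zero => rfl
    | succ k ih => rw [jacobiWronskian_succ hf hg, ih]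
  rw [h m, h n]

end Wronskian

theorem tendsto_of_mul_eq_const {α K : Type*} [NormedField K] {l : Filter α} {c e : α → K}
    {w L : K} (h : ∀ x, c x * e x = w) (he : Tendsto e l (𝓝 L)) (hL : L ≠ 0) :
    Tendsto c l (𝓝 (w / L)) := by
  refine (tendsto_const_nhds.div he hL).congr' ?_
  filter_upwards [he.eventually_ne hL] with x hx
  exact ((eq_div_iff hx).2 (h x)).symm

theorem norm_exp_neg_mul_I_sub_exp_mul_I (x : ℝ) :
    ‖exp (-x * I) - exp (x * I)‖ = 2 * |Real.sin x| := by
  have h : exp (-x * I) - exp (x * I) = -(2 * Real.sin x : ℝ) * I := by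
    push_cast
    linear_combination I * two_sin (x : ℂ) + (exp (-x * I) - exp (x * I)) * I_sq
  rw [h, norm_mul, norm_neg, norm_I, mul_one, norm_real, Real.norm_eq_abs, abs_mul, abs_two]

section Phase

variable (Ω : ℕ → ℝ) (εp εm : ℕ → ℂ)

noncomputable def phaseFactor (n : ℕ) : ℂ :=
  exp (-((Ω (n + 1) - Ω n : ℝ) : ℂ) * I) * (1 + εp n) * (1 + εm (n + 1)) -
    exp (((Ω (n + 1) - Ω n : ℝ) : ℂ) * I) * (1 + εp (n + 1)) * (1 + εm n)

variable {Ω εp εm}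

theorem mul_sub_mul_eq_phaseFactor {v : ℕ → ℝ} {fp fm : ℕ → ℂ}
    (hfp : ∀ n, fp n = (v n : ℂ) * exp (I * (Ω n : ℝ)) * (1 + εp n))
    (hfm : ∀ n, fm n = (v n : ℂ) * exp (-I * (Ω n : ℝ)) * (1 + εm n)) (n : ℕ) :
    fp n * fm (n + 1) - fp (n + 1) * fm n =
      ((v n * v (n + 1) : ℝ) : ℂ) * phaseFactor Ω εp εm n := by
  have hexp : ∀ x y : ℝ, exp (((x - y : ℝ) : ℂ) * I) = exp (I * x) * exp (-I * y) := by
    intro x y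
    rw [← exp_add]
    push_cast
    ring_nf
  have hexp_neg :
      exp (-((Ω (n + 1) - Ω n : ℝ) : ℂ) * I) = exp (I * Ω n) * exp (-I * Ω (n + 1)) := by
    rw [← hexp, ← neg_sub, ofReal_neg, neg_neg]
  rw [hfp, hfp, hfm, hfm, phaseFactor, hexp_neg, hexp]
  push_cast
  ring

theorem tendsto_phaseFactor {ϖ : ℝ} (hΩ : Tendsto (fun n => Ω (n + 1) - Ω n) atTop (𝓝 ϖ))
    (hεp : Tendsto εp atTop (𝓝 0)) (hεm : Tendsto εm atTop (𝓝 0)) :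
    Tendsto (phaseFactor Ω εp εm) atTop (𝓝 (exp (-ϖ * I) - exp (ϖ * I))) := by
  have hΔ : Tendsto (fun n => ((Ω (n + 1) - Ω n : ℝ) : ℂ)) atTop (𝓝 (ϖ : ℂ)) :=
    (continuous_ofReal.tendsto ϖ).comp hΩ
  have hp : Tendsto (fun n => 1 + εp n) atTop (𝓝 1) := by
    simpa using tendsto_const_nhds.add hεp
  have hm : Tendsto (fun n => 1 + εm n) atTop (𝓝 1) := by
    simpa using tendsto_const_nhds.add hεm
  have hp' := hp.comp (tendsto_add_atTop_nat 1)
  have hm' := hm.comp (tendsto_add_atTop_nat 1)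
  have h := (((hΔ.neg.mul_const I).cexp.mul hp).mul hm').sub
    (((hΔ.mul_const I).cexp.mul hp').mul hm)
  rw [mul_one, mul_one, mul_one, mul_one] at h
  exact h

end Phase

/-- Proposition 2.2, case 1°: if two solutions of the Jacobi recurrence have the
oscillating asymptotics `f_n^{(±)} = v_n e^{±iΩ_n}(1 + ε_n^{(±)})` with
`Ω_{n+1} - Ω_n → ϖ ∉ πℤ`, `ε_n^{(±)} → 0`, and the (constant) Wronskian
`W = a₀(f₀⁺ f₁⁻ - f₁⁺ f₀⁻)` is nonzero, then `a_n v_n v_{n+1}` converges to the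
nonzero limit `|W| / (2|sin ϖ|)`. -/
theorem jost_amplitude_limit
    (a b : ℕ → ℝ) (ha : ∀ n, 0 < a n) (z : ℂ)
    (fp fm : ℕ → ℂ)
    (hfp : ∀ n : ℕ, (a n : ℂ) * fp n + (b (n + 1) : ℂ) * fp (n + 1) +
      (a (n + 1) : ℂ) * fp (n + 2) = z * fp (n + 1))
    (hfm : ∀ n : ℕ, (a n : ℂ) * fm n + (b (n + 1) : ℂ) * fm (n + 1) +
      (a (n + 1) : ℂ) * fm (n + 2) = z * fm (n + 1))
    (v : ℕ → ℝ) (hv : ∀ n, 0 < v n) (Ω : ℕ → ℝ) (εp εm : ℕ → ℂ)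
    (hfp_asym : ∀ n, fp n = (v n : ℂ) * Complex.exp (Complex.I * (Ω n : ℝ)) * (1 + εp n))
    (hfm_asym : ∀ n, fm n = (v n : ℂ) * Complex.exp (-Complex.I * (Ω n : ℝ)) * (1 + εm n))
    (ϖ : ℝ) (hΩ : Tendsto (fun n => Ω (n + 1) - Ω n) atTop (𝓝 ϖ))
    (hϖ : ∀ k : ℤ, ϖ ≠ Real.pi * k)
    (hεp : Tendsto εp atTop (𝓝 0)) (hεm : Tendsto εm atTop (𝓝 0))
    (W : ℂ) (hW_def : W = (a 0 : ℂ) * (fp 0 * fm 1 - fp 1 * fm 0)) (hW : W ≠ 0) :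
    Tendsto (fun n => a n * v n * v (n + 1)) atTop
      (𝓝 (‖W‖ / (2 * |Real.sin ϖ|))) ∧ ‖W‖ / (2 * |Real.sin ϖ|) ≠ 0 := by
  have hsin : Real.sin ϖ ≠ 0 :=
    Real.sin_ne_zero_iff.2 fun k hk => hϖ k (by rw [← hk, mul_comm])
  have hW_factor : ∀ n, a n * v n * v (n + 1) * ‖phaseFactor Ω εp εm n‖ = ‖W‖ := by
    intro n
    have hWn : W = (a n : ℂ) * (fp n * fm (n + 1) - fp (n + 1) * fm n) := hW_def.trans <|
      jacobiWronskian_eq (a := fun n => (a n : ℂ)) (b := fun n => (b n : ℂ)) hfp hfm 0 n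
    have hpos : 0 < a n * (v n * v (n + 1)) := mul_pos (ha n) (mul_pos (hv n) (hv (n + 1)))
    rw [hWn, mul_sub_mul_eq_phaseFactor hfp_asym hfm_asym, ← mul_assoc, ← ofReal_mul, norm_mul,
      norm_real, Real.norm_of_nonneg hpos.le, mul_assoc (a n)]
  have hE := (tendsto_phaseFactor hΩ hεp hεm).norm
  rw [norm_exp_neg_mul_I_sub_exp_mul_I] at hE
  have hden : 2 * |Real.sin ϖ| ≠ 0 := by positivity
  exact ⟨tendsto_of_mul_eq_const hW_factor hE hden, div_ne_zero (norm_ne_zero_iff.2 hW) hden⟩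
end
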